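/- Let D be a solid tournament on a countably infinite vertex type. Then D has a solid ray, and there is a solid ray R₊ such that for every solid ray R of D there exist a ray R₁ equivalent to R₊, a ray R₂ equivalent to R, and an infinite family of pairwise vertex-disjoint finite directed paths in D, each starting at a vertex in the image of R₁ and ending at a vertex in the image of R₂. (This says that the end represented by R₊ is the least element of the end order ≤_Ω of D.) -/

import Mathlib

/-- Mutual reachability in `D − X`: `u` and `v` lie in the same strong component
of the restriction of `E` to the complement of `X`. -/
def SameComp {V : Type*} (E : V → V → Prop) (X : Set V) (u v : V) : Prop :=
  Relation.ReflTransGen (fun a b => a ∉ X ∧ b ∉ X ∧ E a b) u v ∧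
  Relation.ReflTransGen (fun a b => a ∉ X ∧ b ∉ X ∧ E a b) v u

/-- A digraph is solid if deleting any finite vertex set leaves only finitely many
strong components. -/
def IsSolid {V : Type*} (E : V → V → Prop) : Prop :=
  ∀ X : Set V, X.Finite →
    {C : Set V | ∃ v, v ∉ X ∧ C = {u | u ∉ X ∧ SameComp E X u v}}.Finite

/-- A ray in a digraph. -/
def IsRay {V : Type*} (E : V → V → Prop) (r : ℕ → V) : Prop :=
  Function.Injective r ∧ ∀ n : ℕ, E (r n) (r (n + 1))

/-- A solid ray: it has a tail in a single strong component of `D − X`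
for every finite `X`. -/
def IsSolidRay {V : Type*} (E : V → V → Prop) (r : ℕ → V) : Prop :=
  IsRay E r ∧ ∀ X : Set V, X.Finite →
    ∃ N : ℕ, (∀ n : ℕ, N ≤ n → r n ∉ X) ∧
      (∀ m n : ℕ, N ≤ m → N ≤ n → SameComp E X (r m) (r n))

/-- Two rays are equivalent if for every finite `X` they have tails in
the same strong component of `D − X`. -/
def RayEquiv {V : Type*} (E : V → V → Prop) (r r' : ℕ → V) : Prop :=
  ∀ X : Set V, X.Finite →
    ∃ N M : ℕ, (∀ n : ℕ, N ≤ n → r n ∉ X) ∧ (∀ m : ℕ, M ≤ m → r' m ∉ X) ∧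
      (∀ n m : ℕ, N ≤ n → M ≤ m → SameComp E X (r n) (r' m))

/-!
Enumerate `V` and let `X₀ ⊆ X₁ ⊆ ⋯` be finite sets exhausting it. In a tournament reachability
in `D − X` is total, and by solidity `D − X` has only finitely many strong components, so `D − Xₖ`
has a least infinite strong component `Aₖ`, one that reaches every other infinite component; the
`Aₖ` are nested. A walk passing successively through `A₀ ⊇ A₁ ⊇ ⋯` visits each vertex finitely
often, so it contains a ray `R₊`. It is solid, and its tails reach every infinite strong component
of every `D − X`. Given a solid ray `R`, either there are edges from arbitrarily late vertices of
`R₊` to arbitrarily late vertices of `R`, and greedily chosen ones form infinitely many disjoint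
`R₊`–`R` paths; or eventually all edges between the two rays point from `R` to `R₊`, which together
with the reachability from `R₊` to `R` makes `R` equivalent to `R₊`, and the one-vertex paths on
`R` do.
-/

section

variable {V : Type*} {E : V → V → Prop} {X Y : Set V} {u v w : V}

def Reach (E : V → V → Prop) (X : Set V) (u v : V) : Prop :=
  Relation.ReflTransGen (fun a b => a ∉ X ∧ b ∉ X ∧ E a b) u v

def strongComp (E : V → V → Prop) (X : Set V) (v : V) : Set V :=
  {u | u ∉ X ∧ SameComp E X u v}

lemma Reach.refl (E : V → V → Prop) (X : Set V) (u : V) : Reach E X u u :=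
  Relation.ReflTransGen.refl

lemma Reach.trans (h : Reach E X u v) (h' : Reach E X v w) : Reach E X u w :=
  Relation.ReflTransGen.trans h h'

lemma Reach.of_edge (hu : u ∉ X) (hv : v ∉ X) (h : E u v) : Reach E X u v :=
  Relation.ReflTransGen.single ⟨hu, hv, h⟩

lemma Reach.anti (hXY : X ⊆ Y) (h : Reach E Y u v) : Reach E X u v :=
  Relation.ReflTransGen.mono
    (fun _ _ ⟨ha, hb, hab⟩ => ⟨fun h => ha (hXY h), fun h => hb (hXY h), hab⟩) _ _ h

lemma reach_total (htot : ∀ u v : V, u ≠ v → E u v ∨ E v u) (hu : u ∉ X) (hv : v ∉ X) :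
    Reach E X u v ∨ Reach E X v u := by
  rcases eq_or_ne u v with rfl | huv
  · exact Or.inl (Reach.refl E X u)
  · exact (htot u v huv).imp (Reach.of_edge hu hv) (Reach.of_edge hv hu)

lemma SameComp.symm (h : SameComp E X u v) : SameComp E X v u := ⟨h.2, h.1⟩

lemma SameComp.trans (h : SameComp E X u v) (h' : SameComp E X v w) : SameComp E X u w :=
  ⟨Reach.trans h.1 h'.1, Reach.trans h'.2 h.2⟩

lemma SameComp.anti (hXY : X ⊆ Y) (h : SameComp E Y u v) : SameComp E X u v :=
  ⟨Reach.anti hXY h.1, Reach.anti hXY h.2⟩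

lemma mem_strongComp_self (hv : v ∉ X) : v ∈ strongComp E X v :=
  ⟨hv, Reach.refl E X v, Reach.refl E X v⟩

lemma strongComp_anti (hXY : X ⊆ Y) (v : V) : strongComp E Y v ⊆ strongComp E X v :=
  fun _ ⟨hu, huv⟩ => ⟨fun h => hu (hXY h), huv.anti hXY⟩

lemma reflTransGen_within_strongComp {c : V} (hu : u ∈ strongComp E X c)
    (hv : v ∈ strongComp E X c) :
    Relation.ReflTransGen (fun a b => b ∈ strongComp E X c ∧ E a b) u v := by
  have huv : Reach E X u v := Reach.trans hu.2.1 hv.2.2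
  induction huv using Relation.ReflTransGen.head_induction_on with
  | refl => exact Relation.ReflTransGen.refl
  | @head a b hab hbv ih =>
    have hb : b ∈ strongComp E X c := ⟨hab.2.1, Reach.trans hbv hv.2.1, hu.2.2.tail hab⟩
    exact Relation.ReflTransGen.head ⟨hb, hab.2.2⟩ (ih hb)

lemma IsSolid.exists_infinite_strongComp (hs : IsSolid E) (hX : X.Finite) {T : Set V}
    (hT : T.Infinite) (hTX : Disjoint T X) : ∃ u ∈ T, (strongComp E X u).Infinite := by
  by_contra! hfin
  refine hT ((((hs X hX).inter_of_left {C | C.Finite}).sUnion fun C hC => hC.2).subset ?_)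
  intro u hu
  have huX : u ∉ X := hTX.notMem_of_mem_left hu
  exact Set.mem_sUnion.2 ⟨strongComp E X u, ⟨⟨u, huX, rfl⟩, hfin u hu⟩, mem_strongComp_self huX⟩

def IsLeastInfiniteComp (E : V → V → Prop) (X : Set V) (a : V) : Prop :=
  a ∉ X ∧ (strongComp E X a).Infinite ∧
    ∀ b, b ∉ X → (strongComp E X b).Infinite → Reach E X a b

/-- Take `a` from which a maximal set of strong components is reachable: by totality of
reachability, any `b` not reachable from `a` would reach strictly more. -/
lemma IsSolid.exists_isLeastInfiniteComp [Infinite V] (htot : ∀ u v : V, u ≠ v → E u v ∨ E v u)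
    (hs : IsSolid E) (hX : X.Finite) : ∃ a, IsLeastInfiniteComp E X a := by
  let S := {v | v ∉ X ∧ (strongComp E X v).Infinite}
  let above (v : V) : Set (Set V) :=
    {C | (∃ w, w ∉ X ∧ C = strongComp E X w) ∧ ∃ c ∈ C, Reach E X v c}
  have hfin : (above '' S).Finite :=
    (hs X hX).finite_subsets.subset (by rintro _ ⟨v, -, rfl⟩ C hC; exact hC.1)
  obtain ⟨v₀, hv₀, hinf₀⟩ :=
    hs.exists_infinite_strongComp hX hX.infinite_compl disjoint_compl_left
  obtain ⟨a, ⟨haX, hainf⟩, hmax⟩ := Set.Finite.exists_maximalFor' above S hfin ⟨v₀, hv₀, hinf₀⟩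
  refine ⟨a, haX, hainf, fun b hbX hbinf => ?_⟩
  by_contra hab
  have hba : Reach E X b a := (reach_total htot haX hbX).resolve_left hab
  have hle : above a ⊆ above b := fun C ⟨hC, c, hc, hac⟩ => ⟨hC, c, hc, hba.trans hac⟩
  obtain ⟨-, c, hc, hac⟩ :=
    hmax ⟨hbX, hbinf⟩ hle ⟨⟨b, hbX, rfl⟩, b, mem_strongComp_self hbX, Reach.refl E X b⟩
  exact hab (hac.trans hc.2.1)

lemma IsLeastInfiniteComp.reach_of_subset {a : V} (hs : IsSolid E)
    (ha : IsLeastInfiniteComp E Y a) (hY : Y.Finite) (hXY : X ⊆ Y)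
    (hinf : (strongComp E X v).Infinite) : Reach E X a v := by
  obtain ⟨u, ⟨huv, huY⟩, huinf⟩ :=
    hs.exists_infinite_strongComp hY (hinf.sdiff hY) Set.disjoint_sdiff_left
  exact ((ha.2.2 u huY huinf).anti hXY).trans huv.2.1

lemma IsLeastInfiniteComp.strongComp_subset {a b : V} (hs : IsSolid E)
    (ha : IsLeastInfiniteComp E X a) (hb : IsLeastInfiniteComp E Y b) (hY : Y.Finite)
    (hXY : X ⊆ Y) : strongComp E Y b ⊆ strongComp E X a := by
  have hbX : b ∉ X := fun h => hb.1 (hXY h)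
  have hba : SameComp E X b a :=
    ⟨hb.reach_of_subset hs hY hXY ha.2.1,
      ha.2.2 b hbX (hb.2.1.mono (strongComp_anti hXY b))⟩
  intro u hu
  obtain ⟨huX, hub⟩ := strongComp_anti hXY b hu
  exact ⟨huX, hub.trans hba⟩

section Walk

variable {A : ℕ → Set V}

/-- A state `(k, x, l)` is at vertex `x` on level `k`, with `l` the rest of a segment leading
from `A k` into `A (k + 1)`; once that is used up, the segment `seg (k + 1) x` is started. -/
def walkStep (seg : ℕ → V → V × List V) : ℕ × V × List V → ℕ × V × List V
  | (k, _, y :: l) => (k, y, l)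
  | (k, x, []) => (k + 1, seg (k + 1) x)

def WalkInv (E : V → V → Prop) (A : ℕ → Set V) (s : ℕ × V × List V) : Prop :=
  s.2.1 ∈ A s.1 ∧ (s.2.1 :: s.2.2).IsChain (fun a b => b ∈ A s.1 ∧ E a b) ∧
    (s.2.1 :: s.2.2).getLast (List.cons_ne_nil _ _) ∈ A (s.1 + 1)

variable {seg : ℕ → V → V × List V}

lemma WalkInv.walkStep (hseg : ∀ k x, x ∈ A k → E x (seg k x).1 ∧ WalkInv E A (k, seg k x))
    {s : ℕ × V × List V} (hs : WalkInv E A s) :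
    E s.2.1 (walkStep seg s).2.1 ∧ WalkInv E A (walkStep seg s) := by
  obtain ⟨k, x, _ | ⟨y, l⟩⟩ := s
  · exact hseg (k + 1) x hs.2.2
  · obtain ⟨hxy, hyl⟩ := List.isChain_cons_cons.1 hs.2.1
    exact ⟨hxy.2, hxy.1, hyl, List.getLast_cons_cons (a := x) ▸ hs.2.2⟩

lemma le_walkStep_fst (s : ℕ × V × List V) : s.1 ≤ (walkStep seg s).1 := by
  obtain ⟨k, x, _ | ⟨y, l⟩⟩ := s <;> simp [walkStep]

lemma walkStep_iterate_fst (s : ℕ × V × List V) :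
    ((walkStep seg)^[s.2.2.length + 1] s).1 = s.1 + 1 := by
  obtain ⟨k, x, l⟩ := s
  induction l generalizing x with
  | nil => rfl
  | cons y l ih => exact ih y

lemma exists_walk_eventually_mem (hA : Antitone A)
    (hseg : ∀ k, ∀ x ∈ A k, ∃ y l, E x y ∧ WalkInv E A (k, y, l)) {x₀ : V} (hx₀ : x₀ ∈ A 0) :
    ∃ w : ℕ → V, (∀ t, E (w t) (w (t + 1))) ∧ ∀ k, ∃ T, ∀ t ≥ T, w t ∈ A k := by
  choose! y l hseg using hseg
  let seg (k : ℕ) (x : V) : V × List V := (y k x, l k x)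
  let s (t : ℕ) : ℕ × V × List V := (walkStep seg)^[t] (0, seg 0 x₀)
  have hsucc (t : ℕ) : s (t + 1) = walkStep seg (s t) := Function.iterate_succ_apply' _ _ _
  have hinv (t : ℕ) : WalkInv E A (s t) := by
    induction t with
    | zero => exact (hseg 0 x₀ hx₀).2
    | succ t ih => exact hsucc t ▸ (ih.walkStep hseg).2
  have hmono : Monotone fun t => (s t).1 :=
    monotone_nat_of_le_succ fun t => hsucc t ▸ le_walkStep_fst (s t)
  have hunbdd (k : ℕ) : ∃ t, k ≤ (s t).1 := by
    induction k with
    | zero => exact ⟨0, Nat.zero_le _⟩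
    | succ k ih =>
      obtain ⟨t, ht⟩ := ih
      refine ⟨(s t).2.2.length + 1 + t, ?_⟩
      have := walkStep_iterate_fst (seg := seg) (s t)
      rw [← Function.iterate_add_apply] at this
      change k + 1 ≤ ((walkStep seg)^[_ + t] _).1
      omega
  refine ⟨fun t => (s t).2.1, fun t => by simpa only [hsucc] using ((hinv t).walkStep hseg).1,
    fun k => ?_⟩
  obtain ⟨T, hT⟩ := hunbdd k
  exact ⟨T, fun t ht => hA (hT.trans (hmono ht)) (hinv t).1⟩

lemma exists_segment (hA : Antitone A) (hne : ∀ k, (A k).Nonempty)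
    (hconn : ∀ k, ∀ u ∈ A k, ∀ v ∈ A k, Relation.ReflTransGen (fun a b => b ∈ A k ∧ E a b) u v)
    (hcap : ∀ v, ∃ k, v ∉ A k) : ∀ k, ∀ x ∈ A k, ∃ y l, E x y ∧ WalkInv E A (k, y, l) := by
  intro k x hx
  obtain ⟨j, hj⟩ := hcap x
  obtain ⟨v, hv⟩ := hne (max j (k + 1))
  have hvA : v ∈ A (k + 1) := hA (le_max_right _ _) hv
  have hvx : x ≠ v := fun h => hj (hA (le_max_left _ _) (h ▸ hv))
  obtain ⟨_ | ⟨y, l⟩, hchain, hlast⟩ :=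
    List.exists_isChain_cons_of_relationReflTransGen (hconn k x hx v (hA k.le_succ hvA))
  · exact absurd hlast hvx
  · obtain ⟨hxy, hyl⟩ := List.isChain_cons_cons.1 hchain
    exact ⟨y, l, hxy.2, hxy.1, hyl, List.getLast_cons_cons (a := x) ▸ hlast ▸ hvA⟩

/-- Keeping only the last visit of each vertex turns a walk into a ray. -/
lemma exists_isRay_comp_of_walk (w : ℕ → V) (hw : ∀ t, E (w t) (w (t + 1)))
    (hfin : ∀ v, {t | w t = v}.Finite) : ∃ s : ℕ → ℕ, StrictMono s ∧ IsRay E (w ∘ s) := by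
  let last (v : V) : ℕ := sSup {t | w t = v}
  have le_last (t : ℕ) : t ≤ last (w t) := le_csSup (hfin _).bddAbove rfl
  have w_last (t : ℕ) : w (last (w t)) = w t :=
    Nat.sSup_mem (s := {t' | w t' = w t}) ⟨t, rfl⟩ (hfin _).bddAbove
  let s (n : ℕ) : ℕ := Nat.rec (last (w 0)) (fun _ m => last (w (m + 1))) n
  have last_s (n : ℕ) : last (w (s n)) = s n := by
    cases n with
    | zero => exact congrArg last (w_last 0)
    | succ n => exact congrArg last (w_last (s n + 1))
  have hmono : StrictMono s := strictMono_nat_of_lt_succ fun n => le_last (s n + 1)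
  refine ⟨s, hmono, fun i j hij => hmono.injective ?_, fun n => ?_⟩
  · rw [← last_s i, ← last_s j]
    exact congrArg last hij
  · change E (w (s n)) (w (last (w (s n + 1))))
    rw [w_last]
    exact hw _

lemma exists_isRay_eventually_mem (hA : Antitone A) (hne : ∀ k, (A k).Nonempty)
    (hconn : ∀ k, ∀ u ∈ A k, ∀ v ∈ A k, Relation.ReflTransGen (fun a b => b ∈ A k ∧ E a b) u v)
    (hcap : ∀ v, ∃ k, v ∉ A k) : ∃ r, IsRay E r ∧ ∀ k, ∃ N, ∀ n ≥ N, r n ∈ A k := by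
  obtain ⟨x₀, hx₀⟩ := hne 0
  obtain ⟨w, hw, hwA⟩ := exists_walk_eventually_mem hA (exists_segment hA hne hconn hcap) hx₀
  have hfin (v : V) : {t | w t = v}.Finite := by
    obtain ⟨k, hk⟩ := hcap v
    obtain ⟨T, hT⟩ := hwA k
    exact (Set.finite_Iio T).subset fun t ht => not_le.1 fun hTt => hk (ht ▸ hT t hTt)
  obtain ⟨s, hs, hray⟩ := exists_isRay_comp_of_walk w hw hfin
  refine ⟨w ∘ s, hray, fun k => ?_⟩
  obtain ⟨T, hT⟩ := hwA k
  exact ⟨T, fun n hn => hT _ (hn.trans hs.le_apply)⟩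

end Walk

lemma exists_finite_exhaustion (V : Type*) [Countable V] :
    ∃ Xs : ℕ → Set V, Monotone Xs ∧ (∀ k, (Xs k).Finite) ∧
      ∀ X : Set V, X.Finite → ∃ k, X ⊆ Xs k := by
  obtain ⟨f, hf⟩ := Countable.exists_injective_nat V
  refine ⟨fun k => f ⁻¹' Set.Iio k, fun j k hjk v hv => lt_of_lt_of_le hv hjk,
    fun k => (Set.finite_Iio k).preimage hf.injOn, fun X hX => ?_⟩
  obtain ⟨K, hK⟩ := (hX.image f).bddAbove
  exact ⟨K + 1, fun v hv => Nat.lt_succ_of_le (hK ⟨v, hv, rfl⟩)⟩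

def ReachesInfiniteComps (E : V → V → Prop) (r : ℕ → V) : Prop :=
  ∀ X : Set V, X.Finite → ∃ N, ∀ n ≥ N, r n ∉ X ∧
    ∀ v, (strongComp E X v).Infinite → Reach E X (r n) v

theorem IsSolid.exists_isSolidRay_reachesInfiniteComps [Countable V] [Infinite V]
    (htot : ∀ u v : V, u ≠ v → E u v ∨ E v u) (hs : IsSolid E) :
    ∃ r, IsSolidRay E r ∧ ReachesInfiniteComps E r := by
  obtain ⟨Xs, hXs, hfin, hcover⟩ := exists_finite_exhaustion V
  choose a ha using fun k => hs.exists_isLeastInfiniteComp htot (hfin k)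
  let A (k : ℕ) : Set V := strongComp E (Xs k) (a k)
  have hA : Antitone A := antitone_nat_of_succ_le fun k =>
    (ha k).strongComp_subset hs (ha (k + 1)) (hfin _) (hXs k.le_succ)
  have hcap (v : V) : ∃ k, v ∉ A k := by
    obtain ⟨k, hk⟩ := hcover {v} (Set.finite_singleton v)
    exact ⟨k, fun hv => hv.1 (hk rfl)⟩
  obtain ⟨r, hr, htail⟩ := exists_isRay_eventually_mem hA
    (fun k => ⟨a k, mem_strongComp_self (ha k).1⟩)
    (fun k _ hu _ hv => reflTransGen_within_strongComp hu hv) hcap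
  refine ⟨r, ⟨hr, fun X hX => ?_⟩, fun X hX => ?_⟩ <;>
    obtain ⟨k, hk⟩ := hcover X hX <;> obtain ⟨N, hN⟩ := htail k
  · exact ⟨N, fun n hn h => (hN n hn).1 (hk h),
      fun m n hm hn => ((hN m hm).2.trans (hN n hn).2.symm).anti hk⟩
  · exact ⟨N, fun n hn => ⟨fun h => (hN n hn).1 (hk h), fun v hinf =>
      Reach.trans (Reach.anti hk (hN n hn).2.1) ((ha k).reach_of_subset hs (hfin k) hk hinf)⟩⟩

section Rays

variable {r R : ℕ → V}

lemma IsRay.exists_forall_notMem (hr : IsRay E r) {S : Set V} (hS : S.Finite) :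
    ∃ K, ∀ n ≥ K, r n ∉ S := by
  obtain ⟨K, hK⟩ := (hS.preimage hr.1.injOn).bddAbove
  exact ⟨K + 1, fun n hn h => by have := hK h; omega⟩

lemma IsSolidRay.rayEquiv_self (hr : IsSolidRay E r) : RayEquiv E r r := fun X hX =>
  let ⟨N, hN, hsame⟩ := hr.2 X hX
  ⟨N, N, hN, hN, hsame⟩

lemma IsSolidRay.exists_infinite_strongComp (hr : IsSolidRay E r) (hX : X.Finite) :
    ∃ M, ∀ m ≥ M, r m ∉ X ∧ (strongComp E X (r m)).Infinite := by
  obtain ⟨M, hM, hsame⟩ := hr.2 X hX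
  refine ⟨M, fun m hm => ⟨hM m hm, ((Set.Ici_infinite M).image hr.1.1.injOn).mono ?_⟩⟩
  rintro _ ⟨n, hn, rfl⟩
  exact ⟨hM n hn, hsame n m hn hm⟩

lemma ReachesInfiniteComps.rayEquiv (htot : ∀ u v : V, u ≠ v → E u v ∨ E v u)
    (hr : ReachesInfiniteComps E r) (hR : IsSolidRay E R) {K : ℕ}
    (hK : ∀ n ≥ K, ∀ m ≥ K, ¬E (r n) (R m)) : RayEquiv E R r := by
  intro X hX
  obtain ⟨N, hN⟩ := hr X hX
  obtain ⟨M, hM⟩ := hR.exists_infinite_strongComp hX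
  refine ⟨max M K, max N K, fun m hm => (hM m (le_of_max_le_left hm)).1,
    fun n hn => (hN n (le_of_max_le_left hn)).1, fun m n hm hn => ?_⟩
  obtain ⟨hRm, hinf⟩ := hM m (le_of_max_le_left hm)
  obtain ⟨hrn, hreach⟩ := hN n (le_of_max_le_left hn)
  refine ⟨?_, hreach _ hinf⟩
  rcases eq_or_ne (R m) (r n) with heq | hne
  · exact heq ▸ Reach.refl E X (R m)
  · exact Reach.of_edge hRm hrn ((htot _ _ hne).resolve_right
      (hK n (le_of_max_le_right hn) m (le_of_max_le_right hm)))

def IsPathFromTo (E : V → V → Prop) (s t : Set V) (l : List V) : Prop :=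
  l.IsChain E ∧ l.Nodup ∧ (∃ x ∈ s, l.head? = some x) ∧ ∃ y ∈ t, l.getLast? = some y

lemma IsRay.exists_singleton_path_avoiding (hr : IsRay E r) (S : Finset V) :
    ∃ l, IsPathFromTo E (Set.range r) (Set.range r) l ∧ ∀ x ∈ l, x ∉ S := by
  obtain ⟨K, hK⟩ := hr.exists_forall_notMem S.finite_toSet
  exact ⟨[r K], ⟨List.isChain_singleton _, List.nodup_singleton _, ⟨r K, ⟨K, rfl⟩, rfl⟩,
    ⟨r K, ⟨K, rfl⟩, rfl⟩⟩, by simpa using hK K le_rfl⟩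

lemma IsRay.exists_edge_path_avoiding (h_irr : ∀ v : V, ¬E v v) (hr : IsRay E r)
    (hR : IsRay E R) (hedge : ∀ K, ∃ n ≥ K, ∃ m ≥ K, E (r n) (R m)) (S : Finset V) :
    ∃ l, IsPathFromTo E (Set.range r) (Set.range R) l ∧ ∀ x ∈ l, x ∉ S := by
  obtain ⟨K₁, hK₁⟩ := hr.exists_forall_notMem S.finite_toSet
  obtain ⟨K₂, hK₂⟩ := hR.exists_forall_notMem S.finite_toSet
  obtain ⟨n, hn, m, hm, hE⟩ := hedge (max K₁ K₂)
  refine ⟨[r n, R m], ⟨List.isChain_pair.2 hE, ?_, ⟨r n, ⟨n, rfl⟩, rfl⟩, ⟨R m, ⟨m, rfl⟩, rfl⟩⟩, ?_⟩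
  · simpa using fun h => h_irr _ (h ▸ hE)
  · simpa using ⟨hK₁ n (le_of_max_le_left hn), hK₂ m (le_of_max_le_right hm)⟩

end Rays

/-- Choose each list to avoid the union of the previously chosen ones. -/
lemma exists_pairwise_disjoint_seq {α : Type*} (p : List α → Prop)
    (h : ∀ S : Finset α, ∃ l, p l ∧ ∀ x ∈ l, x ∉ S) :
    ∃ P : ℕ → List α, (∀ i, p (P i)) ∧ ∀ i j, i ≠ j → ∀ x ∈ P i, x ∉ P j := by
  classical
  choose pick hpick havoid using h
  let G (i : ℕ) : Finset α := Nat.rec ∅ (fun _ S => S ∪ (pick S).toFinset) i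
  have hG : Monotone G := monotone_nat_of_le_succ fun _ => Finset.subset_union_left
  have key (i j : ℕ) (hij : i < j) (x : α) (hx : x ∈ pick (G i)) : x ∉ pick (G j) := fun hxj =>
    havoid _ x hxj (hG hij (Finset.mem_union_right _ (List.mem_toFinset.2 hx)))
  refine ⟨fun i => pick (G i), fun i => hpick _, fun i j hij x hxi hxj => ?_⟩
  rcases hij.lt_or_gt with h | h
  · exact key i j h x hxi hxj
  · exact key j i h x hxj hxi

end

theorem stmt_8 {V : Type*} [Countable V] [Infinite V] (E : V → V → Prop)
    (h_irr : ∀ v : V, ¬ E v v)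
    (h_tour : ∀ u v : V, u ≠ v → Xor' (E u v) (E v u))
    (h_solid : IsSolid E) :
    (∃ R : ℕ → V, IsSolidRay E R) ∧
    ∃ Rplus : ℕ → V, IsSolidRay E Rplus ∧
      ∀ R : ℕ → V, IsSolidRay E R →
        ∃ R₁ R₂ : ℕ → V, IsRay E R₁ ∧ IsRay E R₂ ∧
          RayEquiv E R₁ Rplus ∧ RayEquiv E R₂ R ∧
          ∃ P : ℕ → List V,
            (∀ i : ℕ, (P i).Chain' E ∧ (P i).Nodup ∧
              (∃ x ∈ Set.range R₁, (P i).head? = some x) ∧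
              (∃ y ∈ Set.range R₂, (P i).getLast? = some y)) ∧
            (∀ i j : ℕ, i ≠ j → ∀ x : V, x ∈ P i → x ∉ P j) := by
  have htot : ∀ u v : V, u ≠ v → E u v ∨ E v u := fun u v h => Xor.or (h_tour u v h)
  obtain ⟨Rp, hRp, hreach⟩ := h_solid.exists_isSolidRay_reachesInfiniteComps htot
  refine ⟨⟨Rp, hRp⟩, Rp, hRp, fun R hR => ?_⟩
  by_cases hedge : ∀ K, ∃ n ≥ K, ∃ m ≥ K, E (Rp n) (R m)
  · obtain ⟨P, hP, hdisj⟩ :=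
      exists_pairwise_disjoint_seq _ (hRp.1.exists_edge_path_avoiding h_irr hR.1 hedge)
    exact ⟨Rp, R, hRp.1, hR.1, hRp.rayEquiv_self, hR.rayEquiv_self, P, hP, hdisj⟩
  · push Not at hedge
    obtain ⟨K, hK⟩ := hedge
    obtain ⟨P, hP, hdisj⟩ := exists_pairwise_disjoint_seq _ hR.1.exists_singleton_path_avoiding
    exact ⟨R, R, hR.1, hR.1, hreach.rayEquiv htot hR hK, hR.rayEquiv_self, P, hP, hdisj⟩
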